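/- The function φ(x) = ∫_{S^{n-1}} e^{x·ω} dω is strictly positive for all x ∈ ℝⁿ and depends only on |x|; moreover there exist constants 0 < c ≤ C such that c|x|^{-(n-1)/2} e^{|x|} ≤ φ(x) ≤ C|x|^{-(n-1)/2} e^{|x|} for |x| ≥ 1. -/

import Mathlib

open MeasureTheory

/-- The Yordanov–Zhang test function `φ(x) = ∫_{S^{n-1}} e^{x·ω} dω`. -/
noncomputable def phi (n : ℕ) (x : EuclideanSpace ℝ (Fin n)) : ℝ :=
  ∫ ω : Metric.sphere (0 : EuclideanSpace ℝ (Fin n)) 1,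
    Real.exp (inner ℝ x (ω : EuclideanSpace ℝ (Fin n))) ∂(volume.toSphere)

/-!
The surface measure is invariant under linear isometries, and the reflection through
`(x - y)ᗮ` exchanges `x` and `y` when `‖x‖ = ‖y‖`; so `φ` is radial and
`φ(x) = ∫ e^{r ω₀} dω` with `r = ‖x‖`. Everything then rests on the measure of the polar cap
`{ω : 1 - ω₀ ≤ h}`, which is of order `h^{(n-1)/2}`: Mathlib's sphere measure of a set is `n`
times the volume of the cone `(0, 1) • s`, and the cone over the cap contains, and is contained
in, a box with one side of length `~ 1` along `e₀` and `n - 1` sides of length `~ √h`.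
Restricting the integral to the cap of height `1/r` gives the lower bound. For the upper bound,
`e^{-r(1-ω₀)} = ∫_{1-ω₀}^∞ r e^{-rs} ds`, so after Tonelli the integral is at most
`∫_0^∞ r e^{-rs} K s^{(n-1)/2} ds = K Γ((n+1)/2) r^{-(n-1)/2}`.
-/

open Set Metric Real
open scoped Pointwise ENNReal

namespace LinearIsometryEquiv

variable {E : Type*} [NormedAddCommGroup E] [InnerProductSpace ℝ E]
  [MeasurableSpace E] [BorelSpace E]

noncomputable def unitSphereEquiv (f : E ≃ₗᵢ[ℝ] E) : sphere (0 : E) 1 ≃ᵐ sphere (0 : E) 1 :=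
  (f.toHomeomorph.subtype fun x => by simp).toMeasurableEquiv

variable [FiniteDimensional ℝ E]

lemma measurePreserving_unitSphereEquiv (f : E ≃ₗᵢ[ℝ] E) :
    MeasurePreserving f.unitSphereEquiv volume.toSphere volume.toSphere := by
  refine ⟨f.unitSphereEquiv.measurable, Measure.ext fun s hs => ?_⟩
  have hcone : Ioo (0 : ℝ) 1 • (Subtype.val '' (f.unitSphereEquiv ⁻¹' s)) =
      f.symm '' (Ioo (0 : ℝ) 1 • (Subtype.val '' s)) := by
    rw [← f.unitSphereEquiv.image_symm, image_image, ← Set.image2_smul, ← Set.image2_smul,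
      image_image2_distrib_right fun c x => f.symm.map_smul c x, image_image]
    rfl
  rw [f.unitSphereEquiv.map_apply, Measure.toSphere_apply' _ (f.unitSphereEquiv.measurable hs),
    Measure.toSphere_apply' _ hs, hcone, f.symm.image_eq_preimage_symm, f.symm_symm]
  exact congrArg _ (f.measurePreserving.measure_preimage_equiv (f := f.toMeasurableEquiv) _)

end LinearIsometryEquiv

section SphereIntegral

variable {E : Type*} [NormedAddCommGroup E] [InnerProductSpace ℝ E] [FiniteDimensional ℝ E]
  [MeasurableSpace E] [BorelSpace E]

theorem integral_comp_inner_eq_of_norm_eq (F : ℝ → ℝ) {x y : E} (h : ‖x‖ = ‖y‖) :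
    ∫ ω : sphere (0 : E) 1, F (inner ℝ x (ω : E)) ∂volume.toSphere =
      ∫ ω : sphere (0 : E) 1, F (inner ℝ y (ω : E)) ∂volume.toSphere := by
  set f := (ℝ ∙ (x - y))ᗮ.reflection
  have hfx : f x = y := Submodule.reflection_sub h
  rw [← (f.symm.measurePreserving_unitSphereEquiv).integral_comp']
  refine integral_congr_ae (ae_of_all _ fun ω => congrArg F ?_)
  change inner ℝ x (f.symm ω) = inner ℝ y ω
  rw [← hfx, ← f.inner_map_map, f.apply_symm_apply]

theorem integral_exp_inner_pos [Nontrivial E] (x : E) :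
    0 < ∫ ω : sphere (0 : E) 1, exp (inner ℝ x (ω : E)) ∂volume.toSphere :=
  have : NeZero (volume.toSphere : Measure (sphere (0 : E) 1)) := ⟨Measure.toSphere_ne_zero _⟩
  integral_exp_pos ((by fun_prop : Continuous _).integrable_of_hasCompactSupport
    (HasCompactSupport.of_compactSpace _))

end SphereIntegral

section LayerCake

variable {α : Type*} [MeasurableSpace α] (μ : Measure α) [SFinite μ] {g : α → ℝ}

theorem lintegral_exp_neg_mul_eq_lintegral_meas_lt (hg : Measurable g) (hg0 : ∀ a, 0 ≤ g a)
    {r : ℝ} (hr : 0 < r) :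
    ∫⁻ a, ENNReal.ofReal (exp (-(r * g a))) ∂μ =
      ∫⁻ s in Ioi 0, ENNReal.ofReal (r * exp (-(r * s))) * μ {a | g a < s} := by
  set k : ℝ → ℝ≥0∞ := fun s => ENNReal.ofReal (r * exp (-(r * s)))
  have htail (a : α) :
      ENNReal.ofReal (exp (-(r * g a))) = ∫⁻ s in Ioi 0, (Ioi (g a)).indicator k s := by
    have hint : IntegrableOn (fun s => r * exp (-r * s)) (Ioi (g a)) :=
      (exp_neg_integrableOn_Ioi _ hr).const_mul r
    rw [lintegral_indicator measurableSet_Ioi, Measure.restrict_restrict measurableSet_Ioi,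
      Ioi_inter_Ioi, sup_eq_left.2 (hg0 a)]
    simp only [k, ← neg_mul] at hint ⊢
    rw [← ofReal_integral_eq_lintegral_ofReal hint (ae_of_all _ fun s => by positivity),
      integral_const_mul, integral_exp_mul_Ioi (neg_lt_zero.2 hr)]
    congr 1
    field_simp
  have hmeas : Measurable (Function.uncurry fun a s => (Ioi (g a)).indicator k s) := by
    change Measurable ({p : α × ℝ | g p.1 < p.2}.indicator fun p => k p.2)
    exact (by fun_prop : Measurable _).indicator
      (measurableSet_lt (hg.comp measurable_fst) measurable_snd)
  calc ∫⁻ a, ENNReal.ofReal (exp (-(r * g a))) ∂μ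
      = ∫⁻ a, ∫⁻ s in Ioi (0 : ℝ), (Ioi (g a)).indicator k s ∂volume ∂μ := lintegral_congr htail
    _ = ∫⁻ s in Ioi (0 : ℝ), ∫⁻ a, (Ioi (g a)).indicator k s ∂μ ∂volume :=
        lintegral_lintegral_swap hmeas.aemeasurable
    _ = _ := by
        refine lintegral_congr fun s => ?_
        rw [← lintegral_indicator_const (measurableSet_lt hg measurable_const)]
        rfl

theorem integral_exp_neg_mul_le_of_meas_le_rpow (hg : Measurable g) (hg0 : ∀ a, 0 ≤ g a) {K p r : ℝ}
    (hK : 0 ≤ K) (hp : -1 < p) (hr : 0 < r)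
    (hμ : ∀ s, 0 < s → μ {a | g a ≤ s} ≤ ENNReal.ofReal (K * s ^ p)) :
    ∫ a, exp (-(r * g a)) ∂μ ≤ K * Gamma (p + 1) * r ^ (-p) := by
  have hΓ : 0 < Gamma (p + 1) := Gamma_pos_of_pos (by linarith)
  have hgamma :
      ∫ s in Ioi (0 : ℝ), s ^ p * exp (-(r * s)) = (1 / r) ^ (p + 1) * Gamma (p + 1) := by
    simpa using integral_rpow_mul_exp_neg_mul_Ioi (a := p + 1) (by linarith) hr
  have hint : IntegrableOn (fun s : ℝ => s ^ p * exp (-(r * s))) (Ioi 0) :=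
    .of_integral_ne_zero (by rw [hgamma]; positivity)
  have hbound : ∫⁻ a, ENNReal.ofReal (exp (-(r * g a))) ∂μ ≤
      ∫⁻ s in Ioi (0 : ℝ), ENNReal.ofReal (r * K * (s ^ p * exp (-(r * s)))) := by
    rw [lintegral_exp_neg_mul_eq_lintegral_meas_lt μ hg hg0 hr]
    refine setLIntegral_mono (by fun_prop) fun s hs => ?_
    calc ENNReal.ofReal (r * exp (-(r * s))) * μ {a | g a < s}
        ≤ ENNReal.ofReal (r * exp (-(r * s))) * ENNReal.ofReal (K * s ^ p) :=
          mul_le_mul_right ((measure_mono fun a (ha : g a < s) => ha.le).trans (hμ s hs)) _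
      _ = _ := by rw [← ENNReal.ofReal_mul (by positivity)]; ring_nf
  rw [integral_eq_lintegral_of_nonneg_ae (ae_of_all _ fun _ => (exp_pos _).le) (by fun_prop)]
  refine ENNReal.toReal_le_of_le_ofReal (by positivity) (hbound.trans_eq ?_)
  rw [← ofReal_integral_eq_lintegral_ofReal (hint.const_mul _)
      (ae_restrict_of_forall_mem measurableSet_Ioi fun s (hs : 0 < s) => by positivity),
    integral_const_mul, hgamma, one_div, inv_rpow hr.le, rpow_add hr, rpow_one, rpow_neg hr.le]
  congr 1
  field_simp

end LayerCake

section UnitSphere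

variable {m : ℕ}

local notation "𝔼" => EuclideanSpace ℝ (Fin (m + 1))

lemma EuclideanSpace.norm_sq_eq_sq_zero_add_sum (y : 𝔼) :
    ‖y‖ ^ 2 = y 0 ^ 2 + ∑ i : Fin m, y i.succ ^ 2 := by
  rw [EuclideanSpace.real_norm_sq_eq, Fin.sum_univ_succ]

variable (m) in
def coordBox (I J : Set ℝ) : Set 𝔼 := {y | y 0 ∈ I ∧ ∀ i : Fin m, y i.succ ∈ J}

lemma volume_coordBox_Icc {a b c : ℝ} (hab : a ≤ b) (hc : 0 ≤ c) :
    volume (coordBox m (Icc a b) (Icc (-c) c)) = ENNReal.ofReal ((b - a) * (2 * c) ^ m) := by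
  have hbox : coordBox m (Icc a b) (Icc (-c) c) =
      WithLp.ofLp ⁻¹' univ.pi (Fin.cons (Icc a b) fun _ => Icc (-c) c) := by
    ext y
    simp [coordBox, Fin.forall_fin_succ]
  rw [hbox, (PiLp.volume_preserving_ofLp _).measure_preimage (MeasurableSet.univ_pi
      fun i => Fin.cases measurableSet_Icc (fun _ => measurableSet_Icc) i).nullMeasurableSet,
    volume_pi_pi, Fin.prod_univ_succ, ENNReal.ofReal_mul (sub_nonneg.2 hab),
    ENNReal.ofReal_pow (by positivity)]
  simp [Real.volume_Icc, two_mul]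

variable (m) in
def polarCap (h : ℝ) : Set (sphere (0 : 𝔼) 1) := {ω | 1 - (ω : 𝔼) 0 ≤ h}

lemma measurableSet_polarCap (h : ℝ) : MeasurableSet (polarCap m h) :=
  measurableSet_le (by fun_prop) measurable_const

lemma abs_apply_le_one_of_mem_sphere (ω : sphere (0 : 𝔼) 1) (i : Fin (m + 1)) :
    |(ω : 𝔼) i| ≤ 1 := by
  simpa using PiLp.norm_apply_le (ω : 𝔼) i

lemma sq_apply_succ_le_one_sub_sq {ω : 𝔼} (hω : ‖ω‖ = 1) (i : Fin m) :
    ω i.succ ^ 2 ≤ 1 - ω 0 ^ 2 := by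
  have hsum := EuclideanSpace.norm_sq_eq_sq_zero_add_sum ω
  have hi : ω i.succ ^ 2 ≤ ∑ j : Fin m, ω j.succ ^ 2 :=
    Finset.single_le_sum (fun j _ => sq_nonneg (ω j.succ)) (Finset.mem_univ i)
  rw [hω] at hsum
  linarith

lemma cone_polarCap_subset_coordBox {h : ℝ} (hh : 0 ≤ h) :
    Ioo (0 : ℝ) 1 • (Subtype.val '' polarCap m h) ⊆
      coordBox m (Icc (-1) 1) (Icc (-√(2 * h)) √(2 * h)) := by
  rintro _ ⟨c, ⟨hc0, hc1⟩, _, ⟨ω, hωh, rfl⟩, rfl⟩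
  have hω : ‖(ω : 𝔼)‖ = 1 := mem_sphere_zero_iff_norm.1 ω.2
  have hω0 := abs_apply_le_one_of_mem_sphere ω 0
  have hωh : 1 - (ω : 𝔼) 0 ≤ h := hωh
  refine ⟨?_, fun i => ?_⟩
  · rw [PiLp.smul_apply, smul_eq_mul, mem_Icc, ← abs_le, abs_mul, abs_of_pos hc0]
    nlinarith [abs_nonneg ((ω : 𝔼) 0)]
  · rw [PiLp.smul_apply, smul_eq_mul, mem_Icc, ← abs_le]
    refine abs_le_sqrt ?_
    have hi := sq_apply_succ_le_one_sub_sq hω i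
    obtain ⟨h1, h2⟩ := abs_le.1 hω0
    calc (c * (ω : 𝔼) i.succ) ^ 2 ≤ (ω : 𝔼) i.succ ^ 2 := by
          rw [mul_pow]
          exact mul_le_of_le_one_left (sq_nonneg _) (pow_le_one₀ hc0.le hc1.le)
      _ ≤ (1 - (ω : 𝔼) 0) * (1 + (ω : 𝔼) 0) := by linarith
      _ ≤ h * 2 := by gcongr <;> linarith
      _ = 2 * h := mul_comm _ _

lemma coordBox_subset_cone_polarCap {h : ℝ} (hh0 : 0 ≤ h) (hh1 : h ≤ 1) :
    coordBox m (Icc (1 / 2) (3 / 4)) (Icc (-√(h / (16 * (m + 1)))) √(h / (16 * (m + 1)))) ⊆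
      Ioo (0 : ℝ) 1 • (Subtype.val '' polarCap m h) := by
  rintro y ⟨⟨hy0, hy0'⟩, hy⟩
  have hnorm := EuclideanSpace.norm_sq_eq_sq_zero_add_sum y
  set S := ∑ i : Fin m, y i.succ ^ 2
  have hSnn : 0 ≤ S := Finset.sum_nonneg fun i _ => sq_nonneg _
  have hS : S ≤ h / 16 := by
    have hsq : ∀ i : Fin m, y i.succ ^ 2 ≤ h / (16 * (m + 1)) := fun i =>
      (sq_le_sq' (hy i).1 (hy i).2).trans_eq (sq_sqrt (by positivity))
    calc S ≤ ∑ _i : Fin m, h / (16 * (m + 1)) := Finset.sum_le_sum fun i _ => hsq i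
      _ = m * (h / (16 * (m + 1))) := by simp
      _ ≤ h / 16 := by
        rw [mul_div_assoc', div_le_div_iff₀ (by positivity) (by norm_num)]
        nlinarith
  have hy_pos : 0 < ‖y‖ :=
    lt_of_lt_of_le (by linarith) ((abs_of_pos (by linarith : (0 : ℝ) < y 0)).symm.le.trans
      (PiLp.norm_apply_le y 0))
  have hy_lt : ‖y‖ < 1 := by nlinarith [norm_nonneg y]
  have hcap : (1 - h) * ‖y‖ ≤ y 0 := by
    refine (sq_le_sq₀ (by nlinarith) (by linarith)).1 ?_
    rw [mul_pow, hnorm]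
    have h1 : (1 - h) ^ 2 ≤ 1 - h := by nlinarith
    have h2 : h / 4 ≤ h * y 0 ^ 2 := by
      nlinarith [mul_le_mul_of_nonneg_left (show 1 / 4 ≤ y 0 ^ 2 by nlinarith) hh0]
    nlinarith [mul_le_mul_of_nonneg_right h1 (by positivity : 0 ≤ y 0 ^ 2 + S), mul_nonneg hh0 hSnn]
  refine ⟨‖y‖, ⟨hy_pos, hy_lt⟩, ‖y‖⁻¹ • y, ⟨⟨‖y‖⁻¹ • y, ?_⟩, ?_, rfl⟩, smul_inv_smul₀ hy_pos.ne' y⟩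
  · rw [mem_sphere_zero_iff_norm, norm_smul, norm_inv, norm_norm, inv_mul_cancel₀ hy_pos.ne']
  · change 1 - ‖y‖⁻¹ * y 0 ≤ h
    rw [inv_mul_eq_div, sub_le_comm, le_div_iff₀ hy_pos]
    exact hcap

lemma toSphere_polarCap_le {h : ℝ} (hh : 0 ≤ h) :
    volume.toSphere (polarCap m h) ≤
      ENNReal.ofReal (2 * (m + 1) * 8 ^ (m / 2 : ℝ) * h ^ (m / 2 : ℝ)) := by
  have hside : (2 * √(2 * h)) ^ m = 8 ^ (m / 2 : ℝ) * h ^ (m / 2 : ℝ) := by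
    rw [← mul_rpow (by norm_num) hh, rpow_div_two_eq_sqrt _ (by positivity), rpow_natCast,
      show 8 * h = 2 ^ 2 * (2 * h) by ring, sqrt_mul (by positivity : (0 : ℝ) ≤ 2 ^ 2),
      sqrt_sq zero_le_two]
  rw [Measure.toSphere_apply' _ (measurableSet_polarCap h), finrank_euclideanSpace_fin,
    ← ENNReal.ofReal_natCast]
  calc ENNReal.ofReal ↑(m + 1) * volume (Ioo (0 : ℝ) 1 • (Subtype.val '' polarCap m h))
      ≤ ENNReal.ofReal ↑(m + 1) * volume (coordBox m (Icc (-1) 1) (Icc (-√(2 * h)) √(2 * h))) := by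
        gcongr
        exact cone_polarCap_subset_coordBox hh
    _ = _ := by
        rw [volume_coordBox_Icc (by norm_num) (sqrt_nonneg _), ← ENNReal.ofReal_mul (by positivity),
          hside]
        push_cast
        ring_nf

lemma toSphere_polarCap_ge {h : ℝ} (hh0 : 0 ≤ h) (hh1 : h ≤ 1) :
    ENNReal.ofReal ((m + 1) / 4 / (4 * (m + 1)) ^ (m / 2 : ℝ) * h ^ (m / 2 : ℝ)) ≤
      volume.toSphere (polarCap m h) := by
  set β := √(h / (16 * (m + 1)))
  have hside : (2 * β) ^ m = h ^ (m / 2 : ℝ) / (4 * (m + 1)) ^ (m / 2 : ℝ) := by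
    rw [← div_rpow hh0 (by positivity), rpow_div_two_eq_sqrt _ (by positivity), rpow_natCast,
      show h / (4 * (m + 1)) = 2 ^ 2 * (h / (16 * (m + 1))) by field_simp; ring,
      sqrt_mul (by positivity : (0 : ℝ) ≤ 2 ^ 2), sqrt_sq zero_le_two]
  rw [Measure.toSphere_apply' _ (measurableSet_polarCap h), finrank_euclideanSpace_fin,
    ← ENNReal.ofReal_natCast]
  calc ENNReal.ofReal ((m + 1) / 4 / (4 * (m + 1)) ^ (m / 2 : ℝ) * h ^ (m / 2 : ℝ))
      = ENNReal.ofReal ↑(m + 1) * volume (coordBox m (Icc (1 / 2) (3 / 4)) (Icc (-β) β)) := by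
        rw [volume_coordBox_Icc (by norm_num) (sqrt_nonneg _), ← ENNReal.ofReal_mul (by positivity),
          hside]
        push_cast
        ring_nf
    _ ≤ _ := by
        gcongr
        exact coordBox_subset_cone_polarCap hh0 hh1

theorem integral_exp_mul_apply_zero_le {r : ℝ} (hr : 0 < r) :
    ∫ ω : sphere (0 : 𝔼) 1, exp (r * (ω : 𝔼) 0) ∂volume.toSphere ≤
      2 * (m + 1) * 8 ^ (m / 2 : ℝ) * Gamma (m / 2 + 1) * r ^ (-(m / 2 : ℝ)) * exp r := by
  have hbound := integral_exp_neg_mul_le_of_meas_le_rpow volume.toSphere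
    (g := fun ω : sphere (0 : 𝔼) 1 => 1 - (ω : 𝔼) 0) (by fun_prop)
    (fun ω => sub_nonneg.2 ((le_abs_self _).trans (abs_apply_le_one_of_mem_sphere ω 0)))
    (by positivity) (by linarith [(by positivity : (0 : ℝ) ≤ m / 2)]) hr
    fun s hs => toSphere_polarCap_le hs.le
  calc ∫ ω : sphere (0 : 𝔼) 1, exp (r * (ω : 𝔼) 0) ∂volume.toSphere
      = exp r * ∫ ω : sphere (0 : 𝔼) 1, exp (-(r * (1 - (ω : 𝔼) 0))) ∂volume.toSphere := by
        rw [← integral_const_mul]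
        congr with ω
        rw [← exp_add]
        ring_nf
    _ ≤ exp r * (2 * (m + 1) * 8 ^ (m / 2 : ℝ) * Gamma (m / 2 + 1) * r ^ (-(m / 2 : ℝ))) :=
        mul_le_mul_of_nonneg_left hbound (exp_pos r).le
    _ = _ := mul_comm _ _

theorem integral_exp_mul_apply_zero_ge {r : ℝ} (hr : 1 ≤ r) :
    (m + 1) / 4 / (4 * (m + 1)) ^ (m / 2 : ℝ) * exp (-1) * r ^ (-(m / 2 : ℝ)) * exp r ≤
      ∫ ω : sphere (0 : 𝔼) 1, exp (r * (ω : 𝔼) 0) ∂volume.toSphere := by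
  have hr0 : 0 < r := one_pos.trans_le hr
  have hint : Integrable (fun ω : sphere (0 : 𝔼) 1 => exp (r * (ω : 𝔼) 0)) volume.toSphere :=
    (by fun_prop : Continuous _).integrable_of_hasCompactSupport (.of_compactSpace _)
  have hcap := toSphere_polarCap_ge (m := m) (inv_nonneg.2 hr0.le) (inv_le_one_of_one_le₀ hr)
  calc (m + 1) / 4 / (4 * (m + 1)) ^ (m / 2 : ℝ) * exp (-1) * r ^ (-(m / 2 : ℝ)) * exp r
      = exp (r * (1 - r⁻¹)) * ((m + 1) / 4 / (4 * (m + 1)) ^ (m / 2 : ℝ) * r⁻¹ ^ (m / 2 : ℝ)) := by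
        rw [inv_rpow hr0.le, ← rpow_neg hr0.le, mul_one_sub, mul_inv_cancel₀ hr0.ne',
          sub_eq_add_neg, exp_add]
        ring
    _ ≤ exp (r * (1 - r⁻¹)) * volume.toSphere.real (polarCap m r⁻¹) := by
        gcongr
        exact (ENNReal.ofReal_le_iff_le_toReal (measure_ne_top _ _)).1 hcap
    _ ≤ ∫ ω in polarCap m r⁻¹, exp (r * (ω : 𝔼) 0) ∂volume.toSphere :=
        setIntegral_ge_of_const_le_real (measurableSet_polarCap _) (measure_ne_top _ _)
          (fun ω (hω : 1 - (ω : 𝔼) 0 ≤ r⁻¹) =>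
            exp_le_exp.2 (mul_le_mul_of_nonneg_left (by linarith) hr0.le)) hint.integrableOn
    _ ≤ _ := setIntegral_le_integral hint (ae_of_all _ fun _ => (exp_pos _).le)

lemma phi_eq_integral_exp_mul_apply_zero (x : 𝔼) :
    phi (m + 1) x = ∫ ω : sphere (0 : 𝔼) 1, exp (‖x‖ * (ω : 𝔼) 0) ∂volume.toSphere := by
  have hnorm : ‖x‖ = ‖‖x‖ • EuclideanSpace.single (0 : Fin (m + 1)) (1 : ℝ)‖ := by
    simp [norm_smul]
  rw [phi, integral_comp_inner_eq_of_norm_eq exp hnorm]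
  simp [real_inner_smul_left, EuclideanSpace.inner_single_left]

end UnitSphere

/-- `φ` is strictly positive, radial, and satisfies two-sided bounds
`c|x|^{-(n-1)/2} e^{|x|} ≤ φ(x) ≤ C|x|^{-(n-1)/2} e^{|x|}` for `|x| ≥ 1`. -/
theorem stmt_9 (n : ℕ) (hn : 2 ≤ n) :
    (∀ x : EuclideanSpace ℝ (Fin n), 0 < phi n x) ∧
    (∀ x y : EuclideanSpace ℝ (Fin n), ‖x‖ = ‖y‖ → phi n x = phi n y) ∧
    ∃ c C : ℝ, 0 < c ∧ c ≤ C ∧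
      ∀ x : EuclideanSpace ℝ (Fin n), 1 ≤ ‖x‖ →
        c * ‖x‖ ^ (-((n : ℝ) - 1) / 2) * Real.exp ‖x‖ ≤ phi n x ∧
        phi n x ≤ C * ‖x‖ ^ (-((n : ℝ) - 1) / 2) * Real.exp ‖x‖ := by
  obtain ⟨m, rfl⟩ : ∃ m, n = m + 1 := ⟨n - 1, by omega⟩
  set c : ℝ := (m + 1) / 4 / (4 * (m + 1)) ^ (m / 2 : ℝ) * exp (-1)
  set C : ℝ := 2 * (m + 1) * 8 ^ (m / 2 : ℝ) * Gamma (m / 2 + 1)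
  have hexp : -(((m + 1 : ℕ) : ℝ) - 1) / 2 = -(m / 2 : ℝ) := by push_cast; ring
  refine ⟨integral_exp_inner_pos, fun x y => integral_comp_inner_eq_of_norm_eq exp,
    c, max C c, by positivity, le_max_right C c, fun x hx => ?_⟩
  rw [hexp, phi_eq_integral_exp_mul_apply_zero]
  refine ⟨integral_exp_mul_apply_zero_ge hx,
    (integral_exp_mul_apply_zero_le (by linarith)).trans ?_⟩
  gcongr
  exact le_max_left C c
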